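/- Let L be a loop with a normal involution *. Then L has the anti-automorphic inverse property ((xy)^λ = y^λ x^λ for all x,y) if and only if the map ν(x) = x^*x is a loop homomorphism L → Z(L,*), where Z(L,*) is the set of symmetric central elements. -/

import Mathlib

universe u

class Loop (L : Type u) extends Mul L, One L where
  ldiv : L → L → L
  rdiv : L → L → L
  mul_ldiv : ∀ a b : L, a * ldiv a b = b
  ldiv_mul : ∀ a b : L, ldiv a (a * b) = b
  rdiv_mul : ∀ a b : L, rdiv b a * a = b
  mul_rdiv : ∀ a b : L, rdiv (b * a) a = b
  one_mul : ∀ a : L, 1 * a = a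
  mul_one : ∀ a : L, a * 1 = a

section Magma
variable {M : Type u} (mul : M → M → M)

/-- Left nucleus of a magma. -/
def leftNucS : Set M := {a | ∀ x y, mul (mul a x) y = mul a (mul x y)}
/-- Middle nucleus of a magma. -/
def midNucS : Set M := {a | ∀ x y, mul (mul x a) y = mul x (mul a y)}
/-- Right nucleus of a magma. -/
def rightNucS : Set M := {a | ∀ x y, mul (mul x y) a = mul x (mul y a)}
/-- Nucleus of a magma. -/
def nucS : Set M := leftNucS mul ∩ midNucS mul ∩ rightNucS mul
/-- Commutant (commutative center) of a magma. -/
def commutantS : Set M := {a | ∀ x, mul a x = mul x a}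
/-- Center of a magma: the commutant intersected with the nucleus. -/
def centerS : Set M := commutantS mul ∩ nucS mul
end Magma

namespace Loop
variable {L : Type u} [Loop L]

/-- The left inverse `a^λ`, satisfying `a^λ * a = 1`. -/
def linv (a : L) : L := Loop.rdiv 1 a
/-- The right inverse `a^ρ`, satisfying `a * a^ρ = 1`. -/
def rinv (a : L) : L := Loop.ldiv a 1
/-- The commutator `[a,b]`, defined by `a*b = (b*a)*[a,b]`. -/
def comm (a b : L) : L := Loop.ldiv (b*a) (a*b)
/-- The associator `[a,b,c]`, defined by `(a*b)*c = (a*(b*c))*[a,b,c]`. -/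
def assoc (a b c : L) : L := Loop.ldiv (a*(b*c)) ((a*b)*c)

end Loop

/-- The nucleus of a loop. -/
abbrev LNuc (L : Type u) [Loop L] : Set L := nucS (fun x y : L => x * y)
/-- The commutant of a loop. -/
abbrev LCommutant (L : Type u) [Loop L] : Set L := commutantS (fun x y : L => x * y)
/-- The center of a loop. -/
abbrev LCenter (L : Type u) [Loop L] : Set L := centerS (fun x y : L => x * y)

/-! Since `ν x = x^* x` is central, `x^* = ν x · x^λ`. Pulling the central factors out of
`ν (xy) = (y^* x^*)(xy)` gives `ν (xy) = ν x · ν y · ((y^λ x^λ)(xy))`, so `ν` is multiplicative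
exactly when `y^λ x^λ` is the left inverse of `xy`. Every `ν x` is symmetric for any involution. -/

namespace Loop

variable {L : Type u} [Loop L]

theorem linv_mul (a : L) : linv a * a = 1 :=
  rdiv_mul a 1

theorem mul_right_cancel {a b c : L} (h : a * c = b * c) : a = b := by
  rw [← mul_rdiv c a, h, mul_rdiv]

theorem mul_left_cancel {a b c : L} (h : a * b = a * c) : b = c := by
  rw [← ldiv_mul a b, h, ldiv_mul]

theorem mul_eq_left {a b : L} : a * b = a ↔ b = 1 :=
  ⟨fun h => mul_left_cancel (h.trans (Loop.mul_one a).symm), fun h => h ▸ Loop.mul_one a⟩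

theorem mul_eq_one_iff_eq_linv {a b : L} : a * b = 1 ↔ a = linv b :=
  ⟨fun h => mul_right_cancel (h.trans (linv_mul b).symm), fun h => h ▸ linv_mul b⟩

theorem mem_lCenter_iff {z : L} : z ∈ LCenter L ↔ IsMulCentral z :=
  ⟨fun ⟨hcomm, ⟨hleft, _⟩, hright⟩ => ⟨hcomm, fun b c => (hleft b c).symm, hright⟩,
   fun hz => ⟨hz.comm, ⟨fun b c => (hz.left_assoc b c).symm, hz.mid_assoc⟩, hz.right_assoc⟩⟩

theorem eq_mul_linv_of_isMulCentral {s x : L} (h : IsMulCentral (s * x)) :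
    s = s * x * linv x :=
  mul_right_cancel (by rw [← h.left_assoc, linv_mul, Loop.mul_one])

theorem star_mul_mul_eq (star : L → L) (hanti : ∀ a b : L, star (a * b) = star b * star a)
    (hnorm : ∀ x : L, IsMulCentral (star x * x)) (x y : L) :
    star (x * y) * (x * y) =
      star x * x * (star y * y) * (linv y * linv x * (x * y)) := by
  set c := star y * y
  set d := star x * x
  calc star (x * y) * (x * y) = (c * linv y) * (d * linv x) * (x * y) := by
        rw [hanti, ← eq_mul_linv_of_isMulCentral (hnorm x),
          ← eq_mul_linv_of_isMulCentral (hnorm y)]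
    _ = c * (d * (linv y * linv x)) * (x * y) := by
        rw [← (hnorm y).left_assoc, (hnorm x).left_comm]
    _ = c * (d * (linv y * linv x * (x * y))) := by
        rw [← (hnorm y).left_assoc, ← (hnorm x).left_assoc]
    _ = d * c * (linv y * linv x * (x * y)) := by
        rw [(hnorm y).left_comm, (hnorm x).left_assoc]

end Loop

/-- For a loop with normal involution, the anti-automorphic inverse property
holds iff `ν(x) = x^*x` is a homomorphism into the symmetric center `Z(L,*)`. -/
theorem stmt9 {L : Type u} [Loop L] (star : L → L)
    (hstar2 : ∀ a : L, star (star a) = a)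
    (hanti : ∀ a b : L, star (a * b) = star b * star a)
    (hnorm : ∀ x : L, star x * x ∈ LCenter L) :
    (∀ x y : L, Loop.linv (x * y) = Loop.linv y * Loop.linv x) ↔
      ((∀ x : L, star (star x * x) = star x * x) ∧
       (∀ x y : L, star (x * y) * (x * y) = (star x * x) * (star y * y))) := by
  have hsymm : ∀ x : L, star (star x * x) = star x * x := fun x => by rw [hanti, hstar2]
  have hcentral : ∀ x : L, IsMulCentral (star x * x) := fun x => Loop.mem_lCenter_iff.1 (hnorm x)
  rw [and_iff_right hsymm]
  refine forall₂_congr fun x y => ?_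
  rw [Loop.star_mul_mul_eq star hanti hcentral, Loop.mul_eq_left, Loop.mul_eq_one_iff_eq_linv,
    eq_comm]
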